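/- Let K ⊂ ℝⁿ be a compact C¹ submanifold, and define the pointwise geometric focal distance F_g(p) = inf{r > 0 : p ∈ closure(O_p(r;K) ∩ K)}, where O_p(r;K) = ⋃_{w ∈ UN K_p} B(p + r·w, r). Suppose F_g(p) > 0, let v be a unit normal to K at p, 0 < r < F_g(p), and q = p + r·v. Then there exists an open neighborhood D of p in K such that for all x ∈ D with x ≠ p, ‖x − q‖ > r. -/
import Mathlib


open scoped RealInnerProductSpace

/-- `K` is a `k`-dimensional embedded `C¹` submanifold (without boundary) of `ℝⁿ`:
near each of its points, `K` is the image of an injective `C¹` immersion of an open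
subset of `ℝᵏ`. -/
def IsC1Submanifold {n : ℕ} (k : ℕ) (K : Set (EuclideanSpace ℝ (Fin n))) : Prop :=
  ∀ p ∈ K, ∃ (U : Set (EuclideanSpace ℝ (Fin k))) (V : Set (EuclideanSpace ℝ (Fin n)))
    (φ : EuclideanSpace ℝ (Fin k) → EuclideanSpace ℝ (Fin n)),
      IsOpen U ∧ IsOpen V ∧ p ∈ V ∧ ContDiffOn ℝ 1 φ U ∧ Set.InjOn φ U ∧
      φ '' U = K ∩ V ∧ ∀ x ∈ U, Function.Injective (fderiv ℝ φ x)

/-- `K` is a `k`-dimensional embedded `C^{1,1}` submanifold of `ℝⁿ`: a `C¹`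
submanifold whose local parametrizations have locally Lipschitz derivative. -/
def IsC11Submanifold {n : ℕ} (k : ℕ) (K : Set (EuclideanSpace ℝ (Fin n))) : Prop :=
  ∀ p ∈ K, ∃ (U : Set (EuclideanSpace ℝ (Fin k))) (V : Set (EuclideanSpace ℝ (Fin n)))
    (φ : EuclideanSpace ℝ (Fin k) → EuclideanSpace ℝ (Fin n)) (L : NNReal),
      IsOpen U ∧ IsOpen V ∧ p ∈ V ∧ ContDiffOn ℝ 1 φ U ∧ Set.InjOn φ U ∧
      φ '' U = K ∩ V ∧ (∀ x ∈ U, Function.Injective (fderiv ℝ φ x)) ∧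
      LipschitzOnWith L (fderiv ℝ φ) U

/-- `w` is a normal vector to `K` at `p`: it is orthogonal to the tangent cone of
`K` at `p`. -/
def IsNormalAt {n : ℕ} (K : Set (EuclideanSpace ℝ (Fin n))) (p w : EuclideanSpace ℝ (Fin n)) :
    Prop :=
  ∀ u ∈ tangentConeAt ℝ K p, ⟪u, w⟫ = 0

/-- The normal injectivity radius `i(K, ℝⁿ)` of `K ⊂ ℝⁿ`: the supremum of `0` and
all `r > 0` such that the normal exponential map `(p, v) ↦ p + v` is injective on
normal vectors of length `< r`. -/
noncomputable def normalInjRad {n : ℕ} (K : Set (EuclideanSpace ℝ (Fin n))) : ℝ :=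
  sSup ({0} ∪ {r : ℝ | 0 < r ∧
    Set.InjOn (fun pv : EuclideanSpace ℝ (Fin n) × EuclideanSpace ℝ (Fin n) => pv.1 + pv.2)
      {pv | pv.1 ∈ K ∧ IsNormalAt K pv.1 pv.2 ∧ ‖pv.2‖ < r}})

/-- The rolling-ball radius `R_O(K, ℝⁿ)`: the infimum of radii `r > 0` such that some
open ball of radius `r` tangent to `K` from a normal direction meets `K`. -/
noncomputable def ballRad {n : ℕ} (K : Set (EuclideanSpace ℝ (Fin n))) : ℝ :=
  sInf {r : ℝ | 0 < r ∧ ∃ p ∈ K, ∃ w : EuclideanSpace ℝ (Fin n),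
    IsNormalAt K p w ∧ ‖w‖ = 1 ∧ ∃ q ∈ K, dist (p + r • w) q < r}

/-- `O_p(r; K)`: the union of the open balls of radius `r` tangent to `K` at `p`
from the unit normal directions. -/
def tangentBallUnion {n : ℕ} (K : Set (EuclideanSpace ℝ (Fin n)))
    (p : EuclideanSpace ℝ (Fin n)) (r : ℝ) : Set (EuclideanSpace ℝ (Fin n)) :=
  ⋃ w ∈ {w : EuclideanSpace ℝ (Fin n) | IsNormalAt K p w ∧ ‖w‖ = 1},
    Metric.ball (p + r • w) r

/-- The pointwise geometric focal distance
`F_g(p) = inf {r > 0 : p ∈ closure (O_p(r;K) ∩ K)}` (valued in `[0, ∞]`, being `∞`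
when no such `r` exists). -/
noncomputable def Fg {n : ℕ} (K : Set (EuclideanSpace ℝ (Fin n)))
    (p : EuclideanSpace ℝ (Fin n)) : ENNReal :=
  sInf {s : ENNReal | ∃ r : ℝ, s = ENNReal.ofReal r ∧ 0 < r ∧
    p ∈ closure (tangentBallUnion K p r ∩ K)}

/-- **Lemma 1 (Euclidean case).** Let `K ⊂ ℝⁿ` be a compact `C¹` submanifold,
`p ∈ K` with `F_g(p) > 0`, `v` a unit normal at `p`, `0 < r < F_g(p)` and
`q = p + r v`. Then on some open neighborhood `D` of `p` in `K`, every `x ≠ p`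
satisfies `‖x − q‖ > r`. -/
theorem local_unique_closest_point {n k : ℕ} (K : Set (EuclideanSpace ℝ (Fin n)))
    (hK : IsC1Submanifold k K) (hcomp : IsCompact K)
    (p v : EuclideanSpace ℝ (Fin n)) (r : ℝ)
    (hp : p ∈ K) (hFg : 0 < Fg K p)
    (hv : IsNormalAt K p v) (hvn : ‖v‖ = 1)
    (hr : 0 < r) (hrF : ENNReal.ofReal r < Fg K p) :
    ∃ U : Set (EuclideanSpace ℝ (Fin n)), IsOpen U ∧ p ∈ U ∧
      ∀ x ∈ K ∩ U, x ≠ p → r < ‖x - (p + r • v)‖ := by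

  obtain ⟨r', hr'0, hrr', hr'F⟩ := ENNReal.lt_iff_exists_real_btwn.mp hrF
  have hrr : r < r' := by
    rwa [ENNReal.ofReal_lt_ofReal_iff (lt_of_le_of_lt hr.le (by
      exact_mod_cast (ENNReal.ofReal_lt_ofReal_iff_of_nonneg hr.le).mp hrr'))] at hrr'
  have hr'pos : 0 < r' := lt_trans hr hrr
  have hnotcl : p ∉ closure (tangentBallUnion K p r' ∩ K) := by
    intro h
    have hle : Fg K p ≤ ENNReal.ofReal r' := sInf_le ⟨r', rfl, hr'pos, h⟩
    exact absurd hle (not_le.mpr hr'F)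
  refine ⟨(closure (tangentBallUnion K p r' ∩ K))ᶜ, isClosed_closure.isOpen_compl,
    hnotcl, ?_⟩
  rintro x ⟨hxK, hxU⟩ hxp
  by_contra hle
  push_neg at hle
  have hxO : x ∉ tangentBallUnion K p r' := fun h => hxU (subset_closure ⟨h, hxK⟩)
  have hball : x ∉ Metric.ball (p + r' • v) r' := by
    intro h
    exact hxO (Set.mem_biUnion (show v ∈ {w : EuclideanSpace ℝ (Fin n) |
      IsNormalAt K p w ∧ ‖w‖ = 1} from ⟨hv, hvn⟩) h)
  have hdist : r' ≤ ‖x - (p + r' • v)‖ := by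
    rw [Metric.mem_ball, dist_eq_norm, not_lt] at hball
    exact hball
  set b := x - p with hb
  have hrw : ∀ t : ℝ, x - (p + t • v) = b - t • v := by intro t; rw [hb]; abel
  have expand : ∀ t : ℝ, ‖b - t • v‖ ^ 2 = ‖b‖ ^ 2 - 2 * t * ⟪b, v⟫ + t ^ 2 := by
    intro t
    rw [norm_sub_sq_real, real_inner_smul_right, norm_smul, hvn, Real.norm_eq_abs,
      mul_one, sq_abs]
    ring
  rw [hrw r] at hle
  rw [hrw r'] at hdist
  have h1 : ‖b - r • v‖ ^ 2 ≤ r ^ 2 := by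
    have := norm_nonneg (b - r • v)
    nlinarith
  have h2 : r' ^ 2 ≤ ‖b - r' • v‖ ^ 2 := by nlinarith
  have A : ‖b‖ ^ 2 ≤ 2 * r * ⟪b, v⟫ := by
    have := expand r; linarith
  have B : 2 * r' * ⟪b, v⟫ ≤ ‖b‖ ^ 2 := by
    have := expand r'; linarith
  have hs0 : ⟪b, v⟫ ≤ 0 := by nlinarith
  have hb2 : ‖b‖ ^ 2 ≤ 0 := by nlinarith
  have hbz : b = 0 := by
    have hn : ‖b‖ = 0 := by nlinarith [norm_nonneg b]
    exact norm_eq_zero.mp hn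
  exact hxp (sub_eq_zero.mp hbz)
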